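/- Assume n ≥ 1, m ≥ 1, and the Tanner graph of H is connected (the bipartite graph on vertex set {u_1,…,u_n} ∪ {v_1,…,v_m} with an edge between u_i and v_j iff H_{j,i} ≠ 0 is connected). Let (h, z) be an LP pseudocodeword. Then there exists a nonnegative integer M such that ∑_{α∈R} h_i(α) = M for every i ∈ {1,…,n}. -/

import Mathlib

open Finset

/-- The tuple of sets `X_j(c)`: for each symbol `α`, the set of positions `i` in the
support of the `j`-th row of `H` where `c i = α`. -/
def Xj {R : Type} [Ring R] [DecidableEq R] {n m : ℕ} (H : Fin m → Fin n → R) (j : Fin m)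
    (c : Fin n → R) : R → Finset (Fin n) :=
  fun α => univ.filter (fun i => H j i ≠ 0 ∧ c i = α)

/-- The set `E_j` of all tuples `X_j(c)` arising from words `c` satisfying parity check `j`. -/
def Ej {R : Type} [Ring R] [Fintype R] [DecidableEq R] {n m : ℕ} (H : Fin m → Fin n → R)
    (j : Fin m) : Finset (R → Finset (Fin n)) :=
  (univ.filter (fun c : Fin n → R => ∑ i, H j i * c i = 0)).image (Xj H j)

/-- Membership in the relaxed LP polytope `Q`. -/
def MemQ {R : Type} [Ring R] [Fintype R] [DecidableEq R] {n m : ℕ} (H : Fin m → Fin n → R)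
    (f : Fin n → R → ℝ) (w : Fin m → (R → Finset (Fin n)) → ℝ) : Prop :=
  (∀ j : Fin m, ∀ S ∈ Ej H j, 0 ≤ w j S ∧ w j S ≤ 1) ∧
  (∀ j : Fin m, ∑ S ∈ Ej H j, w j S = 1) ∧
  (∀ j : Fin m, ∀ i : Fin n, H j i ≠ 0 → ∀ α : R, α ≠ 0 →
    f i α = ∑ S ∈ (Ej H j).filter (fun S => i ∈ S α), w j S)

/-- LP pseudocodeword: nonnegative integer vectors `(h, z)` satisfying the defining equations. -/
def IsLPPseudocodeword {R : Type} [Ring R] [Fintype R] [DecidableEq R] {n m : ℕ}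
    (H : Fin m → Fin n → R) (h : Fin n → R → ℤ)
    (z : Fin m → (R → Finset (Fin n)) → ℤ) : Prop :=
  (∀ i α, 0 ≤ h i α) ∧
  (∀ j : Fin m, ∀ S ∈ Ej H j, 0 ≤ z j S) ∧
  (∀ j : Fin m, ∀ i : Fin n, H j i ≠ 0 →
    (∀ α : R, α ≠ 0 → h i α = ∑ S ∈ (Ej H j).filter (fun S => i ∈ S α), z j S) ∧
    h i 0 = ∑ S ∈ (Ej H j).filter (fun S => ∀ α : R, α ≠ 0 → i ∉ S α), z j S)

/-- The embedding of a word `c ∈ Rⁿ` as the point `(ξ(c₁) | … | ξ(c_n))`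
(indicator coordinates for the nonzero symbols). -/
def xiEmb {R : Type} [Zero R] [DecidableEq R] {n : ℕ} (c : Fin n → R) : Fin n → R → ℝ :=
  fun i α => if α ≠ 0 ∧ c i = α then 1 else 0

/-- The linear cost function `λ · fᵀ = ∑_i ∑_{α ∈ R⁻} λ_i^{(α)} f_i^{(α)}`. -/
def costQ {R : Type} [Zero R] [Fintype R] [DecidableEq R] {n : ℕ}
    (lam f : Fin n → R → ℝ) : ℝ :=
  ∑ i, ∑ α ∈ univ.filter (fun α : R => α ≠ 0), lam i α * f i α

/-- Connectedness of the Tanner graph of `H`: the bipartite graph on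
`{u_1,…,u_n} ∪ {v_1,…,v_m}` with `u_i ~ v_j` iff `H j i ≠ 0`. -/
def TannerConnected {R : Type} [Zero R] {n m : ℕ} (H : Fin m → Fin n → R) : Prop :=
  (SimpleGraph.fromRel (fun x y : Fin n ⊕ Fin m =>
      ∃ i j, x = Sum.inl i ∧ y = Sum.inr j ∧ H j i ≠ 0)).Connected

/-- Graph-cover pseudocodeword for the `M`-cover specified by permutations `σ`. -/
def IsGCPseudocodeword {R : Type} [Ring R] [DecidableEq R] {n m : ℕ}
    (H : Fin m → Fin n → R) (M : ℕ) (σ : Fin m → Fin n → Equiv.Perm (Fin M))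
    (p : Fin n → Fin M → R) : Prop :=
  ∀ (j : Fin m) (ℓ : Fin M),
    ∑ i ∈ univ.filter (fun i => H j i ≠ 0), H j i * p i (σ j i ℓ) = 0

/-! If `H j i ≠ 0`, every `S ∈ E_j` puts `i` into exactly one of the sets `S α` (`α ∈ R`,
with `S 0` playing the role of "no nonzero `α`"), so summing the defining equations of `(h, z)`
over `α` gives `∑_α h_i(α) = ∑_{S ∈ E_j} z_{j,S}`. The total mass is therefore constant along
the edges of the Tanner graph, hence on all of it. -/

theorem SimpleGraph.Connected.eq_of_forall_adj {V α : Type*} {G : SimpleGraph V}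
    (hG : G.Connected) {f : V → α} (hf : ∀ u v, G.Adj u v → f u = f v) (u v : V) :
    f u = f v := by
  obtain ⟨w⟩ := hG u v
  induction w with
  | nil => rfl
  | cons hadj _ ih => exact (hf _ _ hadj).trans ih

theorem exists_nat_forall_eq_of_forall_eq {ι : Type*} {f : ι → ℤ} (hf₀ : ∀ i, 0 ≤ f i)
    (hf : ∀ i i', f i = f i') : ∃ M : ℕ, ∀ i, f i = M := by
  rcases isEmpty_or_nonempty ι with hι | ⟨⟨i₀⟩⟩
  · exact ⟨0, isEmptyElim⟩
  · exact ⟨(f i₀).toNat, fun i => by rw [hf i i₀, Int.toNat_of_nonneg (hf₀ i₀)]⟩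

section LPPseudocodeword

variable {R : Type} [Ring R] {n m : ℕ} {H : Fin m → Fin n → R} {j : Fin m} {i : Fin n}

theorem mem_Xj_iff [DecidableEq R] {c : Fin n → R} {α : R} :
    i ∈ Xj H j c α ↔ H j i ≠ 0 ∧ c i = α := by
  simp [Xj]

theorem forall_not_mem_Xj_iff [DecidableEq R] (hij : H j i ≠ 0) (c : Fin n → R) :
    (∀ α : R, α ≠ 0 → i ∉ Xj H j c α) ↔ i ∈ Xj H j c 0 := by
  simp only [mem_Xj_iff, hij, ne_eq, true_and, not_false_eq_true]
  exact ⟨fun hc => by_contra fun hci => hc _ hci rfl, fun hci α hα hcα => hα (hcα ▸ hci)⟩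

theorem sum_ite_mem_of_mem_Ej [Fintype R] [DecidableEq R] {M : Type*} [AddCommMonoid M]
    (hij : H j i ≠ 0) {S : R → Finset (Fin n)} (hS : S ∈ Ej H j) (x : M) :
    ∑ α : R, (if i ∈ S α then x else 0) = x := by
  obtain ⟨c, -, rfl⟩ := mem_image.mp hS
  simp only [mem_Xj_iff, hij, ne_eq, not_false_eq_true, true_and]
  exact Fintype.sum_ite_eq (c i) fun _ => x

variable [Fintype R] [DecidableEq R] {h : Fin n → R → ℤ} {z : Fin m → (R → Finset (Fin n)) → ℤ}

theorem IsLPPseudocodeword.eq_sum_filter_mem (hpc : IsLPPseudocodeword H h z)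
    (hij : H j i ≠ 0) (α : R) :
    h i α = ∑ S ∈ (Ej H j).filter (fun S => i ∈ S α), z j S := by
  obtain ⟨hnonzero, hzero⟩ := hpc.2.2 j i hij
  by_cases hα : α = 0
  · subst hα
    rw [hzero]
    refine sum_congr (filter_congr fun S hS => ?_) fun _ _ => rfl
    obtain ⟨c, -, rfl⟩ := mem_image.mp hS
    exact forall_not_mem_Xj_iff hij c
  · exact hnonzero α hα

theorem IsLPPseudocodeword.sum_eq_sum_Ej (hpc : IsLPPseudocodeword H h z)
    (hij : H j i ≠ 0) :
    ∑ α : R, h i α = ∑ S ∈ Ej H j, z j S := calc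
  ∑ α : R, h i α = ∑ α : R, ∑ S ∈ Ej H j, if i ∈ S α then z j S else 0 := by
    simp only [hpc.eq_sum_filter_mem hij, sum_filter]
  _ = ∑ S ∈ Ej H j, ∑ α : R, if i ∈ S α then z j S else 0 := sum_comm
  _ = ∑ S ∈ Ej H j, z j S := sum_congr rfl fun S hS => sum_ite_mem_of_mem_Ej hij hS _

end LPPseudocodeword

theorem stmt11_general {R : Type} [Ring R] [Fintype R] [DecidableEq R] {n m : ℕ}
    (H : Fin m → Fin n → R) (hconn : TannerConnected H)
    (h : Fin n → R → ℤ) (z : Fin m → (R → Finset (Fin n)) → ℤ)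
    (hpc : IsLPPseudocodeword H h z) :
    ∃ M : ℕ, ∀ i : Fin n, ∑ α : R, h i α = (M : ℤ) := by
  let mass : Fin n ⊕ Fin m → ℤ :=
    Sum.elim (fun i => ∑ α : R, h i α) (fun j => ∑ S ∈ Ej H j, z j S)
  have hadj : ∀ u v, (SimpleGraph.fromRel fun x y : Fin n ⊕ Fin m =>
      ∃ i j, x = .inl i ∧ y = .inr j ∧ H j i ≠ 0).Adj u v → mass u = mass v := by
    rintro u v ⟨-, ⟨i, j, rfl, rfl, hij⟩ | ⟨i, j, rfl, rfl, hij⟩⟩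
    · exact hpc.sum_eq_sum_Ej hij
    · exact (hpc.sum_eq_sum_Ej hij).symm
  exact exists_nat_forall_eq_of_forall_eq
    (fun i => sum_nonneg fun α _ => hpc.1 i α)
    fun i i' => hconn.eq_of_forall_adj hadj (.inl i) (.inl i')

/-- if the Tanner graph of `H` is connected, then for an LP pseudocodeword
`(h, z)` there is a nonnegative integer `M` with `∑_{α∈R} h_i(α) = M` for every `i`. -/
theorem stmt11 {R : Type} [Ring R] [Fintype R] [DecidableEq R] {n m : ℕ}
    (hn : 0 < n) (hm : 0 < m)
    (H : Fin m → Fin n → R) (hconn : TannerConnected H)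
    (h : Fin n → R → ℤ) (z : Fin m → (R → Finset (Fin n)) → ℤ)
    (hpc : IsLPPseudocodeword H h z) :
    ∃ M : ℕ, ∀ i : Fin n, ∑ α : R, h i α = (M : ℤ) :=
  stmt11_general H hconn h z hpc
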